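/- Let (θ,θ') be a factor pair of an infinite set X. Then: (1) (θ,θ') is an atom of Fact(X) if and only if θ' is a p-relation for some prime p; (2) (θ,θ') is of finite height in Fact(X) (there is a finite bound on the sizes of chains in the interval [0,(θ,θ')]) if and only if θ' is an n-relation for some positive integer n. -/

import Mathlib

/-- A factor pair is a pair of equivalence relations with `θ ∩ θ' = Δ` and `θ ∘ θ' = ∇`. -/
def IsFactorPair {X : Type*} (θ θ' : Setoid X) : Prop :=
  (∀ x y : X, θ x y ∧ θ' x y ↔ x = y) ∧
  ∀ x y : X, Relation.Comp (⇑θ) (⇑θ') x y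

/-- `Fact X`, the set of factor pairs of `X`. -/
def FactPair (X : Type*) : Type _ :=
  {p : Setoid X × Setoid X // IsFactorPair p.1 p.2}

/-- The order on `Fact X`: `(θ,θ') ≤ (φ,φ')` iff `φ ⊆ θ`, `θ' ⊆ φ'` and `φ∘θ' = θ'∘φ`. -/
def FactLE {X : Type*} (p q : FactPair X) : Prop :=
  q.1.1 ≤ p.1.1 ∧ p.1.2 ≤ q.1.2 ∧
    Relation.Comp (⇑q.1.1) (⇑p.1.2) = Relation.Comp (⇑p.1.2) (⇑q.1.1)

def FactLT {X : Type*} (p q : FactPair X) : Prop :=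
  FactLE p q ∧ p ≠ q

/-- The orthocomplementation `(θ,θ')^⊥ = (θ',θ)` on `Fact X`. -/
def FactPerp {X : Type*} (p : FactPair X) : FactPair X :=
  ⟨(p.1.2, p.1.1), by
    obtain ⟨h1, h2⟩ := p.2
    refine ⟨fun x y => ⟨fun h => (h1 x y).1 ⟨h.2, h.1⟩, ?_⟩, fun x y => ?_⟩
    · rintro rfl
      exact ⟨p.1.2.refl' x, p.1.1.refl' x⟩
    · obtain ⟨z, hz1, hz2⟩ := h2 y x
      exact ⟨z, p.1.2.symm' hz2, p.1.1.symm' hz1⟩⟩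

/-- `0 = (∇,Δ)` in `Fact X`. -/
def FactZero (X : Type*) : FactPair X :=
  ⟨(⊤, ⊥), by
    refine ⟨fun x y => ⟨fun h => ?_, ?_⟩, fun x y => ⟨y, ?_, ?_⟩⟩
    · simpa [Setoid.bot_def] using h.2
    · rintro rfl
      exact ⟨(⊤ : Setoid X).refl' x, (⊥ : Setoid X).refl' x⟩
    · simp [Setoid.top_def]
    · simp [Setoid.bot_def]⟩

/-- `1 = (Δ,∇)` in `Fact X`. -/
def FactOne (X : Type*) : FactPair X :=
  ⟨(⊥, ⊤), by
    refine ⟨fun x y => ⟨fun h => ?_, ?_⟩, fun x y => ⟨x, ?_, ?_⟩⟩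
    · simpa [Setoid.bot_def] using h.1
    · rintro rfl
      exact ⟨(⊥ : Setoid X).refl' x, (⊤ : Setoid X).refl' x⟩
    · simp [Setoid.bot_def]
    · simp [Setoid.top_def]⟩

/-- An atom of `Fact X`. -/
def IsFactAtom {X : Type*} (a : FactPair X) : Prop :=
  FactLT (FactZero X) a ∧ ∀ x : FactPair X, FactLT (FactZero X) x → ¬ FactLT x a

/-- An `n`-relation: every equivalence class has exactly `n` elements. -/
def IsNRel {X : Type*} (n : ℕ) (θ : Setoid X) : Prop :=
  ∀ x : X, Nat.card {y // θ x y} = n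

/-- A `p`-atom: an atom `(φ,φ')` such that `φ'` is a `p`-relation. -/
def IsPAtom {X : Type*} (p : ℕ) (a : FactPair X) : Prop :=
  IsFactAtom a ∧ IsNRel p a.1.2

/-- The image `σ(θ) = {(σ x, σ y) : (x,y) ∈ θ}` of an equivalence relation under a
permutation. -/
def permSetoid {X : Type*} (σ : Equiv.Perm X) (θ : Setoid X) : Setoid X :=
  ⟨fun a b => θ (σ.symm a) (σ.symm b),
    ⟨fun a => θ.refl' _, fun h => θ.symm' h, fun h1 h2 => θ.trans' h1 h2⟩⟩

/-- The action `Γ(σ)(θ,θ') = (σ(θ),σ(θ'))` of a permutation on factor pairs. -/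
def permFactPair {X : Type*} (σ : Equiv.Perm X) (t : FactPair X) : FactPair X :=
  ⟨(permSetoid σ t.1.1, permSetoid σ t.1.2), by
    obtain ⟨h1, h2⟩ := t.2
    refine ⟨fun x y => ⟨fun h => ?_, ?_⟩, fun x y => ?_⟩
    · exact σ.symm.injective ((h1 (σ.symm x) (σ.symm y)).1 ⟨h.1, h.2⟩)
    · rintro rfl
      exact ⟨t.1.1.refl' _, t.1.2.refl' _⟩
    · obtain ⟨w, hw1, hw2⟩ := h2 (σ.symm x) (σ.symm y)
      refine ⟨σ w, ?_, ?_⟩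
      · show t.1.1 (σ.symm x) (σ.symm (σ w))
        simpa using hw1
      · show t.1.2 (σ.symm (σ w)) (σ.symm y)
        simpa using hw2⟩

/-- An automorphism of `Fact X`: a bijection preserving `≤` in both directions and
commuting with `⊥`. -/
def IsFactAut {X : Type*} (α : FactPair X → FactPair X) : Prop :=
  Function.Bijective α ∧
  (∀ p q : FactPair X, FactLE p q ↔ FactLE (α p) (α q)) ∧
  ∀ p : FactPair X, α (FactPerp p) = FactPerp (α p)

/-- `Eq*(X)`: the equivalence relations on `X` that are `n`-relations for some `n ≥ 1`. -/
def EqStar (X : Type*) : Type _ :=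
  {θ : Setoid X // ∃ n : ℕ, 0 < n ∧ IsNRel n θ}

/-- A regular equivalence relation: any two classes are equinumerous. -/
def IsRegularRel {X : Type*} (θ : Setoid X) : Prop :=
  ∀ x y : X, Nonempty ({z // θ x z} ≃ {z // θ y z})

/-- The action of a permutation on `Eq*(X)`. -/
def permEqStar {X : Type*} (σ : Equiv.Perm X) (θ : EqStar X) : EqStar X :=
  ⟨permSetoid σ θ.1, by
    obtain ⟨n, hn, hrel⟩ := θ.2
    refine ⟨n, hn, fun x => ?_⟩
    have e : {y // (permSetoid σ θ.1) x y} ≃ {y // θ.1 (σ.symm x) y} :=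
      σ.symm.subtypeEquiv fun y => Iff.rfl
    rw [Nat.card_congr e]
    exact hrel (σ.symm x)⟩

/-! A factor pair `(θ, θ')` of `X` is the same thing as a product decomposition `X ≃ A × B`
(take `A = X/θ'` and `B = X/θ`), and then every `θ'`-class has `|B|` elements. Factor pairs of
`B` lift injectively and monotonically into the interval `[0, (θ, θ')]`. Hence a splitting
`B ≃ B₁ × B₂` into nontrivial factors, which exists when `|B|` is composite or infinite, yields an
element strictly between `0` and `(θ, θ')`, and for infinite `B` iterating the lift along
`B ≃ B × B` yields arbitrarily long chains. Conversely, for `c ≤ (θ, θ')` the class size of the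
second relation of `c` divides `|B|` and determines `c` among the elements of a chain; so chains
have at most as many elements as `|B|` has divisors, and a prime `|B|` makes `(θ, θ')` an atom. -/

open Function

universe u

namespace Setoid

variable {X : Type*}

theorem finite_class_of_le {r s : Setoid X} (hrs : r ≤ s) (x : X) [Finite {y // s x y}] :
    Finite {y // r x y} :=
  Finite.of_injective (Subtype.map id fun _ h => hrs h) (Subtype.map_injective _ injective_id)

theorem card_class_dvd_of_le {r s : Setoid X} (hrs : r ≤ s)
    (hr : ∀ y z, Nat.card {w // r y w} = Nat.card {w // r z w}) (x : X) [Finite {y // s x y}] :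
    Nat.card {y // r x y} ∣ Nat.card {y // s x y} := by
  let r' : Setoid {y // s x y} := r.comap Subtype.val
  let q : {y // s x y} → Quotient r' := Quotient.mk r'
  have : Fintype (Quotient r') := Fintype.ofFinite _
  -- the fibres of `q` are the `r`-classes contained in the `s`-class of `x`
  have hfiber : ∀ c, Nat.card {u // q u = c} = Nat.card {y // r x y} := by
    refine Quotient.ind fun u => ?_
    rw [hr x u.1]
    exact Nat.card_congr
      { toFun := fun v => ⟨v.1.1, r.symm' (Quotient.eq (r := r').mp v.2)⟩
        invFun := fun w => ⟨⟨w.1, s.trans' u.2 (hrs w.2)⟩, Quotient.eq (r := r').mpr (r.symm' w.2)⟩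
        left_inv := fun _ => rfl
        right_inv := fun _ => rfl }
  rw [← Nat.card_congr (Equiv.sigmaFiberEquiv q), Nat.card_sigma]
  exact Finset.dvd_sum fun c _ => (hfiber c).symm.dvd

theorem eq_of_le_of_card_class_eq {r s : Setoid X} (hrs : r ≤ s) (hs : ∀ x, Finite {y // s x y})
    (hcard : ∀ x, Nat.card {y // r x y} = Nat.card {y // s x y}) : r = s := by
  ext x y
  refine ⟨fun h => hrs h, fun h => ?_⟩
  have hclass : {y | r x y} = {y | s x y} :=
    Set.eq_of_subset_of_ncard_le (fun _ h => hrs h) (hcard x).ge (Set.finite_coe_iff.mp (hs x))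
  exact (Set.ext_iff.mp hclass y).mpr h

end Setoid

section FactorPairs

variable {X A B : Type*}

@[simp] theorem factZero_fst_apply (x y : X) : (FactZero X).1.1 x y := trivial
@[simp] theorem factZero_snd_apply (x y : X) : (FactZero X).1.2 x y ↔ x = y := Iff.rfl
@[simp] theorem factOne_fst_apply (x y : X) : (FactOne X).1.1 x y ↔ x = y := Iff.rfl
@[simp] theorem factOne_snd_apply (x y : X) : (FactOne X).1.2 x y := trivial

theorem FactPair.ext {p q : FactPair X} (h₁ : ∀ x y, p.1.1 x y ↔ q.1.1 x y)
    (h₂ : ∀ x y, p.1.2 x y ↔ q.1.2 x y) : p = q :=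
  Subtype.ext (Prod.ext (Setoid.ext h₁) (Setoid.ext h₂))

theorem factZero_le (c : FactPair X) : FactLE (FactZero X) c := by
  refine ⟨le_top, bot_le, funext₂ fun x y => ?_⟩
  simp [Relation.Comp]

theorem le_factOne (c : FactPair X) : FactLE c (FactOne X) := by
  refine ⟨bot_le, le_top, funext₂ fun x y => ?_⟩
  simp [Relation.Comp]

theorem factOne_ne_factZero [Nontrivial X] : FactOne X ≠ FactZero X := by
  intro h
  obtain ⟨x, y, hxy⟩ := exists_pair_ne X
  have := congrArg (fun p : FactPair X => p.1.2 x y) h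
  simp [hxy] at this

theorem FactLE.eq_of_snd_eq {p q : FactPair X} (hle : FactLE p q) (h : p.1.2 = q.1.2) :
    p = q := by
  refine Subtype.ext (Prod.ext (le_antisymm (fun x y hxy => ?_) hle.1) h)
  obtain ⟨z, hxz, hzy⟩ := q.2.2 x y
  have hzy' : p.1.1 z y := p.1.1.trans' (p.1.1.symm' (hle.1 hxz)) hxy
  rwa [(p.2.1 z y).1 ⟨hzy', h ▸ hzy⟩] at hxz

def prodPair (e : X ≃ A × B) : FactPair X :=
  ⟨(Setoid.ker (Prod.snd ∘ e), Setoid.ker (Prod.fst ∘ e)),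
    fun x y => and_comm.trans (Prod.ext_iff.symm.trans e.injective.eq_iff),
    fun x y => ⟨e.symm ((e y).1, (e x).2), by simp [Setoid.ker_def], by simp [Setoid.ker_def]⟩⟩

@[simp] theorem prodPair_fst_apply (e : X ≃ A × B) (x y : X) :
    (prodPair e).1.1 x y ↔ (e x).2 = (e y).2 := Iff.rfl

@[simp] theorem prodPair_snd_apply (e : X ≃ A × B) (x y : X) :
    (prodPair e).1.2 x y ↔ (e x).1 = (e y).1 := Iff.rfl

theorem exists_eq_prodPair {X : Type u} (p : FactPair X) :
    ∃ (A B : Type u) (e : X ≃ A × B), p = prodPair e := by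
  let f : X → Quotient p.1.2 × Quotient p.1.1 := fun x => (Quotient.mk _ x, Quotient.mk _ x)
  have hf : Bijective f := by
    refine ⟨fun x y hxy => (p.2.1 x y).1 ?_, ?_⟩
    · obtain ⟨h₂, h₁⟩ := Prod.mk.inj hxy
      exact ⟨Quotient.exact h₁, Quotient.exact h₂⟩
    · rintro ⟨a, b⟩
      induction a, b using Quotient.inductionOn₂ with
      | h a b =>
        obtain ⟨z, hbz, hza⟩ := p.2.2 b a
        exact ⟨z, Prod.ext (Quotient.sound hza) (Quotient.sound (p.1.1.symm' hbz))⟩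
  exact ⟨_, _, Equiv.ofBijective f hf, FactPair.ext (by simp [f, Quotient.eq])
    (by simp [f, Quotient.eq])⟩

theorem card_class_prodPair_snd (e : X ≃ A × B) (x : X) :
    Nat.card {y // (prodPair e).1.2 x y} = Nat.card B :=
  Nat.card_congr
    { toFun := fun y => (e y).2
      invFun := fun b => ⟨e.symm ((e x).1, b), by simp⟩
      left_inv := fun y => Subtype.ext <| e.injective <| Prod.ext (by simpa using y.2) (by simp)
      right_inv := fun b => by simp }

theorem isNRel_prodPair_snd_iff [Nonempty X] (e : X ≃ A × B) (n : ℕ) :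
    IsNRel n (prodPair e).1.2 ↔ Nat.card B = n := by
  simp only [IsNRel, card_class_prodPair_snd, forall_const]

theorem prodPair_eq_factZero [Subsingleton B] (e : X ≃ A × B) : prodPair e = FactZero X :=
  ((factZero_le _).eq_of_snd_eq (Setoid.ext fun _ _ =>
    ⟨fun h => h ▸ rfl, fun h => e.injective (Prod.ext h (Subsingleton.elim _ _))⟩)).symm

theorem FactPair.card_snd_class_eq (p : FactPair X) (x y : X) :
    Nat.card {z // p.1.2 x z} = Nat.card {z // p.1.2 y z} := by
  obtain ⟨A, B, e, rfl⟩ := exists_eq_prodPair p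
  rw [card_class_prodPair_snd, card_class_prodPair_snd]

theorem FactLE.card_snd_class_dvd {c a : FactPair X} (h : FactLE c a) (x : X)
    [Finite {y // a.1.2 x y}] : Nat.card {y // c.1.2 x y} ∣ Nat.card {y // a.1.2 x y} :=
  Setoid.card_class_dvd_of_le h.2.1 c.card_snd_class_eq x

theorem FactLE.eq_of_card_snd_class_eq {c a : FactPair X} (h : FactLE c a) (x : X)
    [Finite {y // a.1.2 x y}] (hx : Nat.card {y // c.1.2 x y} = Nat.card {y // a.1.2 x y}) :
    c = a := by
  have : Nonempty {y // a.1.2 x y} := ⟨⟨x, a.1.2.refl' x⟩⟩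
  have hfin (y : X) : Finite {z // a.1.2 y z} :=
    Nat.finite_of_card_ne_zero (by rw [a.card_snd_class_eq y x]; exact Nat.card_pos.ne')
  refine h.eq_of_snd_eq (Setoid.eq_of_le_of_card_class_eq h.2.1 hfin fun y => ?_)
  rw [c.card_snd_class_eq y x, a.card_snd_class_eq y x, hx]

def liftPair (e : X ≃ A × B) (c : FactPair B) : FactPair X :=
  ⟨(c.1.1.comap (Prod.snd ∘ e), Setoid.ker (Prod.fst ∘ e) ⊓ c.1.2.comap (Prod.snd ∘ e)),
    fun x y => ⟨fun ⟨h₁, h₂, h₃⟩ => e.injective (Prod.ext h₂ ((c.2.1 _ _).1 ⟨h₁, h₃⟩)),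
      fun h => h ▸ ⟨c.1.1.refl' _, rfl, c.1.2.refl' _⟩⟩,
    fun x y => by
      obtain ⟨w, h₁, h₂⟩ := c.2.2 (e x).2 (e y).2
      exact ⟨e.symm ((e y).1, w), by simp [Setoid.comap_rel, h₁],
        by simp [Setoid.inf_iff_and, Setoid.ker_def, Setoid.comap_rel, h₂]⟩⟩

@[simp] theorem liftPair_fst_apply (e : X ≃ A × B) (c : FactPair B) (x y : X) :
    (liftPair e c).1.1 x y ↔ c.1.1 (e x).2 (e y).2 := Iff.rfl

@[simp] theorem liftPair_snd_apply (e : X ≃ A × B) (c : FactPair B) (x y : X) :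
    (liftPair e c).1.2 x y ↔ (e x).1 = (e y).1 ∧ c.1.2 (e x).2 (e y).2 := Iff.rfl

theorem liftPair_le_liftPair (e : X ≃ A × B) {c d : FactPair B} (h : FactLE c d) :
    FactLE (liftPair e c) (liftPair e d) := by
  refine ⟨fun x y hxy => h.1 hxy, fun x y hxy => ⟨hxy.1, h.2.1 hxy.2⟩,
    funext₂ fun x y => propext ?_⟩
  have hcomp := Iff.of_eq (congrFun₂ h.2.2 (e x).2 (e y).2)
  simpa [Relation.Comp, e.exists_congr_left] using hcomp

theorem liftPair_injective [Nonempty A] (e : X ≃ A × B) : Injective (liftPair e) := by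
  intro c d h
  obtain ⟨a⟩ := ‹Nonempty A›
  refine FactPair.ext (fun b b' => ?_) (fun b b' => ?_)
  · simpa using congrArg (fun p : FactPair X => p.1.1 (e.symm (a, b)) (e.symm (a, b'))) h
  · simpa using congrArg (fun p : FactPair X => p.1.2 (e.symm (a, b)) (e.symm (a, b'))) h

theorem liftPair_factZero (e : X ≃ A × B) : liftPair e (FactZero B) = FactZero X :=
  FactPair.ext (fun x y => by simp) fun x y => by
    simp [← Prod.ext_iff, e.injective.eq_iff]

theorem liftPair_factOne (e : X ≃ A × B) : liftPair e (FactOne B) = prodPair e :=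
  FactPair.ext (fun x y => by simp) fun x y => by simp

theorem liftPair_ne_factOne [Nontrivial A] [Nonempty B] (e : X ≃ A × B) (c : FactPair B) :
    liftPair e c ≠ FactOne X := by
  intro h
  obtain ⟨a, a', ha⟩ := exists_pair_ne A
  obtain ⟨b⟩ := ‹Nonempty B›
  simpa [ha] using congrArg (fun p : FactPair X => p.1.2 (e.symm (a, b)) (e.symm (a', b))) h

theorem not_isFactAtom_prodPair [Nonempty A] (e : X ≃ A × B) {c : FactPair B}
    (h₀ : c ≠ FactZero B) (h₁ : c ≠ FactOne B) : ¬ IsFactAtom (prodPair e) := by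
  refine fun ha => ha.2 (liftPair e c) ⟨factZero_le _, fun h => h₀ ?_⟩ ⟨?_, fun h => h₁ ?_⟩
  · exact liftPair_injective e (h.symm.trans (liftPair_factZero e).symm)
  · exact liftPair_factOne e ▸ liftPair_le_liftPair e (le_factOne c)
  · exact liftPair_injective e (h.trans (liftPair_factOne e).symm)

theorem exists_ne_factZero_ne_factOne_of_equiv {B₁ B₂ : Type*} [Nontrivial B₁] [Nontrivial B₂]
    (f : B ≃ B₁ × B₂) : ∃ c : FactPair B, c ≠ FactZero B ∧ c ≠ FactOne B :=
  ⟨liftPair f (FactOne B₂),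
    fun h => factOne_ne_factZero (liftPair_injective f (h.trans (liftPair_factZero f).symm)),
    liftPair_ne_factOne f _⟩

theorem nonempty_equiv_prod_self (B : Type*) [Infinite B] : Nonempty (B ≃ B × B) := by
  rw [← Cardinal.eq, Cardinal.mk_prod, Cardinal.lift_id,
    Cardinal.mul_eq_self (Cardinal.aleph0_le_mk B)]

theorem exists_ne_factZero_ne_factOne [Nontrivial B] (hB : ¬ (Nat.card B).Prime) :
    ∃ c : FactPair B, c ≠ FactZero B ∧ c ≠ FactOne B := by
  cases finite_or_infinite B with
  | inl _ =>
    obtain ⟨m, ⟨t, ht⟩, hm, hmB⟩ := Nat.exists_dvd_of_not_prime2 Finite.one_lt_card hB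
    have : Nontrivial (Fin m) := Fin.nontrivial_iff_two_le.mpr hm
    have : Nontrivial (Fin t) := Fin.nontrivial_iff_two_le.mpr (by
      rcases t with _ | _ | t <;> simp_all)
    exact exists_ne_factZero_ne_factOne_of_equiv
      ((Finite.equivFinOfCardEq ht).trans finProdFinEquiv.symm)
  | inr _ =>
    exact exists_ne_factZero_ne_factOne_of_equiv (nonempty_equiv_prod_self B).some

theorem isFactAtom_prodPair_iff [Nonempty A] (e : X ≃ A × B) :
    IsFactAtom (prodPair e) ↔ (Nat.card B).Prime := by
  constructor
  · intro ha
    by_contra hB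
    cases subsingleton_or_nontrivial B with
    | inl _ => exact ha.1.2 (prodPair_eq_factZero e).symm
    | inr _ =>
      obtain ⟨c, h₀, h₁⟩ := exists_ne_factZero_ne_factOne hB
      exact not_isFactAtom_prodPair e h₀ h₁ ha
  · intro hp
    have : Nonempty B := Nat.card_pos_iff.mp hp.pos |>.1
    obtain ⟨x⟩ : Nonempty X := ⟨e.symm (Classical.arbitrary _)⟩
    have hx := card_class_prodPair_snd e x
    have : Finite {y // (prodPair e).1.2 x y} := Nat.finite_of_card_ne_zero (hx ▸ hp.ne_zero)
    refine ⟨⟨factZero_le _, fun h => hp.one_lt.ne' ?_⟩, fun c ⟨_, h₀⟩ ⟨hc, h₁⟩ => ?_⟩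
    · rw [← h] at hx
      simpa using hx.symm
    rcases (Nat.dvd_prime hp).mp (hx ▸ hc.card_snd_class_dvd x) with hc₁ | hcp
    · have : Finite {y // c.1.2 x y} := Nat.finite_of_card_ne_zero (by simp [hc₁])
      exact h₀ ((factZero_le c).eq_of_card_snd_class_eq x (by simp [hc₁]))
    · exact h₁ (hc.eq_of_card_snd_class_eq x (hcp.trans hx.symm))

theorem isFactAtom_iff_exists_prime [Nonempty X] (a : FactPair X) :
    IsFactAtom a ↔ ∃ p : ℕ, p.Prime ∧ IsNRel p a.1.2 := by
  obtain ⟨A, B, e, rfl⟩ := exists_eq_prodPair a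
  have : Nonempty A := ⟨(e (Classical.arbitrary X)).1⟩
  simp only [isFactAtom_prodPair_iff, isNRel_prodPair_snd_iff, exists_eq_right']

theorem exists_isChain_card_eq [Nontrivial A] [Nonempty B] (e : B ≃ A × B) (N : ℕ) :
    ∃ C : Finset (FactPair B), IsChain FactLE (C : Set (FactPair B)) ∧ C.card = N := by
  let c : ℕ → FactPair B := fun k => (liftPair e)^[k] (FactOne B)
  have iterate_le (n : ℕ) {p q : FactPair B} (h : FactLE p q) :
      FactLE ((liftPair e)^[n] p) ((liftPair e)^[n] q) := by
    induction n with
    | zero => exact h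
    | succ n ih => simpa only [iterate_succ_apply'] using liftPair_le_liftPair e ih
  have hle {k l : ℕ} (hkl : k ≤ l) : FactLE (c l) (c k) := by
    obtain ⟨m, rfl⟩ := Nat.exists_eq_add_of_le hkl
    simpa only [c, iterate_add_apply] using iterate_le k (le_factOne _)
  have hne (k m : ℕ) : c k ≠ c (k + m + 1) := fun h =>
    liftPair_ne_factOne e _ ((liftPair_injective e).iterate k
      (by simpa only [c, add_assoc, iterate_add_apply, iterate_succ_apply'] using h)).symm
  have hinj : Injective c := by
    intro k l h
    rcases lt_trichotomy k l with hkl | rfl | hkl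
    · obtain ⟨m, rfl⟩ := Nat.exists_eq_add_of_lt hkl
      exact absurd h (hne k m)
    · rfl
    · obtain ⟨m, rfl⟩ := Nat.exists_eq_add_of_lt hkl
      exact absurd h.symm (hne l m)
  refine ⟨(Finset.range N).map ⟨c, hinj⟩, ?_, by simp⟩
  rw [Finset.coe_map]
  rintro _ ⟨k, -, rfl⟩ _ ⟨l, -, rfl⟩ -
  exact (le_total k l).symm.imp hle hle

theorem FactPair.card_le_of_isChain {a : FactPair X} (x : X) [Finite {y // a.1.2 x y}]
    {C : Finset (FactPair X)} (hC : ∀ c ∈ C, FactLE c a)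
    (hchain : IsChain FactLE (C : Set (FactPair X))) : C.card ≤ Nat.card {y // a.1.2 x y} := by
  have : Nonempty {y // a.1.2 x y} := ⟨⟨x, a.1.2.refl' x⟩⟩
  let D : FactPair X → ℕ := fun c => Nat.card {y // c.1.2 x y}
  have hD : Set.InjOn D C := by
    intro c hc d hd hcd
    by_contra hne
    rcases hchain hc hd hne with h | h
    · have := Setoid.finite_class_of_le (hC d hd).2.1 x
      exact hne (h.eq_of_card_snd_class_eq x hcd)
    · have := Setoid.finite_class_of_le (hC c hc).2.1 x
      exact hne (h.eq_of_card_snd_class_eq x hcd.symm).symm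
  calc C.card = (C.image D).card := (Finset.card_image_of_injOn hD).symm
    _ ≤ (Nat.card {y // a.1.2 x y}).divisors.card := Finset.card_le_card fun d hd => by
        obtain ⟨c, hc, rfl⟩ := Finset.mem_image.mp hd
        exact Nat.mem_divisors.mpr ⟨(hC c hc).card_snd_class_dvd x, Nat.card_pos.ne'⟩
    _ ≤ Nat.card {y // a.1.2 x y} := Nat.card_divisors_le_self _

def HasFiniteHeight (a : FactPair X) : Prop :=
  ∃ N : ℕ, ∀ C : Finset (FactPair X), (∀ c ∈ C, FactLE (FactZero X) c ∧ FactLE c a) →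
    IsChain FactLE (C : Set (FactPair X)) → C.card ≤ N

theorem hasFiniteHeight_prodPair_iff [Nonempty A] [Nonempty B] (e : X ≃ A × B) :
    HasFiniteHeight (prodPair e) ↔ Finite B := by
  constructor
  · rintro ⟨N, hN⟩
    by_contra hB
    have : Infinite B := not_finite_iff_infinite.mp hB
    obtain ⟨C, hchain, hcard⟩ := exists_isChain_card_eq (nonempty_equiv_prod_self B).some (N + 1)
    have hle := hN (C.map ⟨liftPair e, liftPair_injective e⟩) (fun c hc => ?_) ?_
    · simp [hcard] at hle
    · obtain ⟨d, -, rfl⟩ := Finset.mem_map.mp hc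
      exact ⟨factZero_le _, liftPair_factOne e ▸ liftPair_le_liftPair e (le_factOne d)⟩
    · rw [Finset.coe_map]
      exact hchain.image_of_map_rel FactLE FactLE (liftPair e) fun _ _ => liftPair_le_liftPair e
  · intro hB
    obtain ⟨x⟩ : Nonempty X := ⟨e.symm (Classical.arbitrary _)⟩
    have hx := card_class_prodPair_snd e x
    have : Finite {y // (prodPair e).1.2 x y} :=
      Nat.finite_of_card_ne_zero (hx ▸ Nat.card_pos.ne')
    exact ⟨Nat.card B, fun C hC hchain =>
      hx ▸ FactPair.card_le_of_isChain x (fun c hc => (hC c hc).2) hchain⟩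

theorem hasFiniteHeight_iff_exists_isNRel [Nonempty X] (a : FactPair X) :
    HasFiniteHeight a ↔ ∃ n : ℕ, 0 < n ∧ IsNRel n a.1.2 := by
  obtain ⟨A, B, e, rfl⟩ := exists_eq_prodPair a
  have : Nonempty A := ⟨(e (Classical.arbitrary X)).1⟩
  have : Nonempty B := ⟨(e (Classical.arbitrary X)).2⟩
  simp [hasFiniteHeight_prodPair_iff, isNRel_prodPair_snd_iff, Nat.card_pos_iff, *]

end FactorPairs

/-- For a factor pair `(θ,θ')` of an infinite set `X`: (1) `(θ,θ')` is an atom of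
`Fact X` iff `θ'` is a `p`-relation for some prime `p`; (2) `(θ,θ')` has finite height
(the sizes of chains in `[0,(θ,θ')]` are boundedly finite) iff `θ'` is an `n`-relation
for some positive `n`. -/
theorem factPair_atom_and_finite_height (X : Type*) [Infinite X]
    (θ θ' : Setoid X) (h : IsFactorPair θ θ') :
    (IsFactAtom (⟨(θ, θ'), h⟩ : FactPair X) ↔ ∃ p : ℕ, p.Prime ∧ IsNRel p θ') ∧
    ((∃ N : ℕ, ∀ C : Finset (FactPair X),
        (∀ c ∈ C, FactLE (FactZero X) c ∧ FactLE c ⟨(θ, θ'), h⟩) →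
        IsChain FactLE (↑C : Set (FactPair X)) → C.card ≤ N) ↔
      ∃ n : ℕ, 0 < n ∧ IsNRel n θ') :=
  ⟨isFactAtom_iff_exists_prime _, hasFiniteHeight_iff_exists_isNRel _⟩
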